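/- arXiv:2107.11543 — 6 statements merged into one kernel-verified Lean document; each statement's English description precedes it below -/
import Mathlib

section
/- Let $G$ be a real symmetric positive definite $n\times n$ matrix whose off-diagonal entries are all nonpositive ($G_{ij} \le 0$ for $i \neq j$). Then every entry of the inverse matrix $G^{-1}$ is nonnegative. Consequently, if $S \in \mathbb{R}^n$ satisfies $G S \ge 0$ entrywise, then $S \ge 0$ entrywise. -/
/-!
Write `S = S⁺ - S⁻` with disjointly supported nonnegative parts. Since the off-diagonal entries
of `G` are nonpositive and `S⁻ i * S⁺ i = 0`, the cross term `S⁻ ⬝ᵥ G *ᵥ S⁺` is `≤ 0`, so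
`0 ≤ S⁻ ⬝ᵥ G *ᵥ S` forces `S⁻ ⬝ᵥ G *ᵥ S⁻ ≤ 0`, hence `S⁻ = 0` by positive definiteness.
Applying this to the columns of `G⁻¹`, whose images under `G` are the standard basis vectors,
gives `0 ≤ G⁻¹`.
-/

open Matrix

lemma negPart_mul_posPart_eq_zero {α : Type*} [Ring α] [LinearOrder α] [IsOrderedRing α]
    (a : α) : a⁻ * a⁺ = 0 := by
  rcases le_total a 0 with h | h
  · rw [posPart_eq_zero.mpr h, mul_zero]
  · rw [negPart_eq_zero.mpr h, zero_mul]

namespace Matrix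

variable {ι : Type*} [Fintype ι] {G : Matrix ι ι ℝ}

lemma dotProduct_mulVec_nonpos_of_offDiag_nonpos (hoff : ∀ i j, i ≠ j → G i j ≤ 0)
    {x y : ι → ℝ} (hx : 0 ≤ x) (hy : 0 ≤ y) (hxy : ∀ i, x i * y i = 0) :
    x ⬝ᵥ G *ᵥ y ≤ 0 := by
  simp only [dotProduct, mulVec, Finset.mul_sum]
  refine Finset.sum_nonpos fun i _ => Finset.sum_nonpos fun j _ => ?_
  obtain rfl | hij := eq_or_ne i j
  · rw [mul_left_comm, hxy i, mul_zero]
  · rw [mul_left_comm]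
    exact mul_nonpos_of_nonpos_of_nonneg (hoff i j hij) (mul_nonneg (hx i) (hy j))

lemma nonneg_of_mulVec_nonneg (hpos : G.PosDef) (hoff : ∀ i j, i ≠ j → G i j ≤ 0)
    {S : ι → ℝ} (hS : 0 ≤ G *ᵥ S) : 0 ≤ S := by
  have hcross : S⁻ ⬝ᵥ G *ᵥ S⁺ ≤ 0 :=
    dotProduct_mulVec_nonpos_of_offDiag_nonpos hoff (negPart_nonneg S) (posPart_nonneg S)
      fun i => by simp only [Pi.negPart_apply, Pi.posPart_apply, negPart_mul_posPart_eq_zero]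
  have hmixed : 0 ≤ S⁻ ⬝ᵥ G *ᵥ S :=
    Finset.sum_nonneg fun i _ => mul_nonneg (negPart_nonneg S i) (hS i)
  have hneg : S⁻ ⬝ᵥ G *ᵥ S⁻ ≤ 0 := by
    have hsplit : G *ᵥ S = G *ᵥ S⁺ - G *ᵥ S⁻ := by rw [← mulVec_sub, posPart_sub_negPart]
    rw [hsplit, dotProduct_sub] at hmixed
    linarith
  have hS_neg : S⁻ = 0 := by
    by_contra hne
    exact (hpos.dotProduct_mulVec_pos hne).not_ge hneg
  rw [← posPart_sub_negPart S, hS_neg, sub_zero]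
  exact posPart_nonneg S

lemma inv_nonneg_of_offDiag_nonpos [DecidableEq ι] (hpos : G.PosDef)
    (hoff : ∀ i j, i ≠ j → G i j ≤ 0) (i j : ι) : 0 ≤ G⁻¹ i j := by
  have hcol : G *ᵥ G⁻¹.col j = Pi.single j 1 := by
    rw [← mulVec_single_one, mulVec_mulVec, mul_nonsing_inv G ((isUnit_iff_isUnit_det G).mp hpos.isUnit), one_mulVec]
  have hsingle : (0 : ι → ℝ) ≤ Pi.single j 1 := Pi.single_nonneg.mpr zero_le_one
  exact nonneg_of_mulVec_nonneg hpos hoff (hcol ▸ hsingle) i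

end Matrix

theorem stmt_0_general {n : ℕ} (G : Matrix (Fin n) (Fin n) ℝ)
    (hpos : G.PosDef)
    (hoff : ∀ i j, i ≠ j → G i j ≤ 0) :
    (∀ i j, 0 ≤ G⁻¹ i j) ∧
      ∀ S : Fin n → ℝ, (∀ i, 0 ≤ G.mulVec S i) → ∀ i, 0 ≤ S i :=
  ⟨inv_nonneg_of_offDiag_nonpos hpos hoff,
    fun _ hS => nonneg_of_mulVec_nonneg hpos hoff hS⟩

/-- A real symmetric positive definite matrix with nonpositive off-diagonal entries
has an entrywise nonnegative inverse; consequently `G S ≥ 0` entrywise implies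
`S ≥ 0` entrywise. -/
theorem stmt_0 {n : ℕ} (G : Matrix (Fin n) (Fin n) ℝ)
    (hsymm : G.IsSymm) (hpos : G.PosDef)
    (hoff : ∀ i j, i ≠ j → G i j ≤ 0) :
    (∀ i j, 0 ≤ G⁻¹ i j) ∧
      ∀ S : Fin n → ℝ, (∀ i, 0 ≤ G.mulVec S i) → ∀ i, 0 ≤ S i :=
  stmt_0_general G hpos hoff
end

section
/- Let $V$ be a finite-dimensional real inner product space with a basis $\alpha_1, \dots, \alpha_r$ satisfying $\langle \alpha_i, \alpha_j \rangle \le 0$ for all $i \neq j$, and let $\varpi_1, \dots, \varpi_r$ be the dual basis defined by $\langle \alpha_i, \varpi_j \rangle = \delta_{ij}$; assume furthermore $\langle \varpi_i, \varpi_j \rangle \ge 0$ for all $i, j$. Let $C^- = \{Y \in V \mid \langle \alpha_i, Y \rangle \le 0 \text{ for all } i\}$. If $(Y_s)_{s \in S}$ is a family of elements of $C^-$ such that for each $i$ the set $\{\langle \varpi_i, Y_s \rangle : s \in S\}$ is bounded above, then the element $Y \in V$ defined by $\langle \varpi_i, Y \rangle = \sup_{s \in S} \langle \varpi_i, Y_s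 \rangle$ for all $i$ also lies in $C^-$. -/
open scoped RealInnerProductSpace

/-!
In the basis `α`, the coordinates of a vector `X` are the `⟪ϖ j, X⟫`. For a fixed `s`, the
difference `Z - Y s` has nonnegative coordinates, so since the `α j` are pairwise obtuse,
`⟪α i, Z - Y s⟫` is at most its diagonal term `⟪ϖ i, Z - Y s⟫ * ‖α i‖²`. Hence
`⟪α i, Z⟫ ≤ (⨆ t, ⟪ϖ i, Y t⟫ - ⟪ϖ i, Y s⟫) * ‖α i‖²` for every `s`, and the right-hand side
can be made arbitrarily small by the choice of `s`.
-/

namespace Module.Basis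

variable {V : Type*} [NormedAddCommGroup V] [InnerProductSpace ℝ V]
  {ι : Type*} [DecidableEq ι] (α : Basis ι ℝ V) {ϖ : ι → V}

theorem repr_apply_eq_inner_of_dual (hdual : ∀ i j, ⟪α i, ϖ j⟫ = if i = j then (1 : ℝ) else 0)
    (X : V) (j : ι) : α.repr X j = ⟪ϖ j, X⟫ := by
  have hcoord : innerₛₗ ℝ (ϖ j) = α.coord j :=
    α.ext fun i => by
      rw [innerₛₗ_apply_apply, real_inner_comm, hdual, coord_apply, repr_self, Finsupp.single_apply]
  simpa using (LinearMap.congr_fun hcoord X).symm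

theorem inner_eq_sum_inner_dual_mul [Fintype ι]
    (hdual : ∀ i j, ⟪α i, ϖ j⟫ = if i = j then (1 : ℝ) else 0)
    (a X : V) : ⟪a, X⟫ = ∑ j, ⟪ϖ j, X⟫ * ⟪a, α j⟫ := by
  conv_lhs => rw [← α.sum_repr X]
  simp [inner_sum, real_inner_smul_right, α.repr_apply_eq_inner_of_dual hdual]

theorem inner_le_add_inner_dual_sub_mul [Fintype ι]
    (hdual : ∀ i j, ⟪α i, ϖ j⟫ = if i = j then (1 : ℝ) else 0)
    (hobtuse : ∀ i j, i ≠ j → ⟪α i, α j⟫ ≤ 0) {X Y : V} (hXY : ∀ j, 0 ≤ ⟪ϖ j, X - Y⟫) (i : ι) :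
    ⟪α i, X⟫ ≤ ⟪α i, Y⟫ + ⟪ϖ i, X - Y⟫ * ⟪α i, α i⟫ := by
  have hoff : ∑ j ∈ Finset.univ.erase i, ⟪ϖ j, X - Y⟫ * ⟪α i, α j⟫ ≤ 0 :=
    Finset.sum_nonpos fun j hj =>
      mul_nonpos_of_nonneg_of_nonpos (hXY j) (hobtuse i j (Finset.ne_of_mem_erase hj).symm)
  have hsplit := α.inner_eq_sum_inner_dual_mul hdual (α i) (X - Y)
  rw [← Finset.add_sum_erase _ _ (Finset.mem_univ i), inner_sub_right] at hsplit
  linarith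

end Module.Basis

theorem nonpos_of_forall_le_ciSup_sub_mul {S : Type*} [Nonempty S] {f : S → ℝ} {A c : ℝ}
    (hA : 0 ≤ A) (h : ∀ s, c ≤ ((⨆ t, f t) - f s) * A) : c ≤ 0 := by
  by_contra! hc
  rcases hA.eq_or_lt with rfl | hA
  · obtain ⟨s⟩ := ‹Nonempty S›
    exact hc.not_ge (by simpa using h s)
  obtain ⟨s, hs⟩ : ∃ s, (⨆ t, f t) - c / A < f s :=
    exists_lt_of_lt_ciSup (sub_lt_self _ (div_pos hc hA))
  have hgap : ((⨆ t, f t) - f s) * A < c := (lt_div_iff₀ hA).mp (by linarith)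
  linarith [h s]

theorem stmt_3_general {V : Type*} [NormedAddCommGroup V] [InnerProductSpace ℝ V]
    {r : ℕ}
    (α : Module.Basis (Fin r) ℝ V) (ϖ : Fin r → V)
    (hdual : ∀ i j, ⟪α i, ϖ j⟫ = if i = j then (1 : ℝ) else 0)
    (hobtuse : ∀ i j, i ≠ j → ⟪α i, α j⟫ ≤ 0)
    {S : Type*} [Nonempty S] (Y : S → V)
    (hmem : ∀ s i, ⟪α i, Y s⟫ ≤ 0)
    (hbdd : ∀ i, BddAbove (Set.range fun s => ⟪ϖ i, Y s⟫))
    (Z : V) (hZ : ∀ i, ⟪ϖ i, Z⟫ = ⨆ s, ⟪ϖ i, Y s⟫) :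
    ∀ i, ⟪α i, Z⟫ ≤ 0 := by
  intro i
  refine nonpos_of_forall_le_ciSup_sub_mul (f := fun s => ⟪ϖ i, Y s⟫)
    (real_inner_self_nonneg (x := α i)) fun s => ?_
  have hcoord : ∀ j, 0 ≤ ⟪ϖ j, Z - Y s⟫ := fun j => by
    rw [inner_sub_right, hZ, sub_nonneg]
    exact le_ciSup (hbdd j) s
  have hle := α.inner_le_add_inner_dual_sub_mul hdual hobtuse hcoord i
  rw [inner_sub_right, hZ] at hle
  linarith [hmem s i]

/-- The negative Weyl chamber is stable under coordinatewise suprema in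
fundamental-weight coordinates: if the `Y s` all satisfy `⟪αᵢ, Y s⟫ ≤ 0` and the
coordinates `⟪ϖᵢ, Y s⟫` are bounded above, then the element `Z` with
`⟪ϖᵢ, Z⟫ = ⨆ s, ⟪ϖᵢ, Y s⟫` also satisfies `⟪αᵢ, Z⟫ ≤ 0` for all `i`. -/
theorem stmt_3 {V : Type*} [NormedAddCommGroup V] [InnerProductSpace ℝ V]
    [FiniteDimensional ℝ V] {r : ℕ}
    (α : Module.Basis (Fin r) ℝ V) (ϖ : Fin r → V)
    (hdual : ∀ i j, ⟪α i, ϖ j⟫ = if i = j then (1 : ℝ) else 0)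
    (hobtuse : ∀ i j, i ≠ j → ⟪α i, α j⟫ ≤ 0)
    (hweights : ∀ i j, 0 ≤ ⟪ϖ i, ϖ j⟫)
    {S : Type*} [Nonempty S] (Y : S → V)
    (hmem : ∀ s i, ⟪α i, Y s⟫ ≤ 0)
    (hbdd : ∀ i, BddAbove (Set.range fun s => ⟪ϖ i, Y s⟫))
    (Z : V) (hZ : ∀ i, ⟪ϖ i, Z⟫ = ⨆ s, ⟪ϖ i, Y s⟫) :
    ∀ i, ⟪α i, Z⟫ ≤ 0 :=
  stmt_3_general α ϖ hdual hobtuse Y hmem hbdd Z hZ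
end

section
/- Let $d \ge 1$ and let $f, g : \{0, 1, \dots, d\} \to \mathbb{R}$ be convex functions with $f(0) = f(d) = g(0) = g(d) = 0$. Suppose that $g(i) \le f(i)$ for every interior point $i \in \{1, \dots, d-1\}$ at which $f$ is strictly convex, i.e., $f(i+1) - 2f(i) + f(i-1) > 0$. Then $g(i) \le f(i)$ for all $i \in \{0, \dots, d\}$. -/
/-- Telescoping sum of increments. -/
private lemma tele (h : ℕ → ℝ) : ∀ a j, a ≤ j →
    ∑ k ∈ Finset.Ico a j, (h (k + 1) - h k) = h j - h a := by
  intro a j haj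
  induction j with
  | zero =>
    have : a = 0 := Nat.le_zero.mp haj
    subst this; simp
  | succ n ih =>
    rcases Nat.lt_or_ge a (n + 1) with hlt | hge
    · have han : a ≤ n := Nat.lt_succ_iff.mp hlt
      rw [Finset.sum_Ico_succ_top han, ih han]; ring
    · have : a = n + 1 := le_antisymm haj hge
      subst this; simp

/-- Discrete maximum principle: a convex function on `[a,b]` which is `≤ 0` at
the endpoints is `≤ 0` everywhere on `[a,b]`. -/
private lemma chord (h : ℕ → ℝ) (a b : ℕ)
    (hconv : ∀ k, a < k → k < b → 0 ≤ h (k + 1) - 2 * h k + h (k - 1))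
    (ha : h a ≤ 0) (hb : h b ≤ 0) :
    ∀ j, a ≤ j → j ≤ b → h j ≤ 0 := by
  have mono : ∀ q p, a ≤ p → p ≤ q → q < b → h (p + 1) - h p ≤ h (q + 1) - h q := by
    intro q
    induction q with
    | zero =>
      intro p hap hpq _
      have : p = 0 := Nat.le_zero.mp hpq
      subst this; exact le_refl _
    | succ n ih =>
      intro p hap hpq hqb
      rcases Nat.lt_or_ge p (n + 1) with hp | hp
      · have h1 := ih p hap (Nat.lt_succ_iff.mp hp) (by omega)
        have h2 := hconv (n + 1) (by omega) hqb
        simp only [Nat.add_sub_cancel] at h2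
        linarith
      · have : p = n + 1 := le_antisymm hpq hp
        subst this; exact le_refl _
  intro j haj hjb
  by_contra hpos
  push_neg at hpos
  rcases eq_or_lt_of_le haj with rfl | halt
  · linarith
  rcases eq_or_lt_of_le hjb with rfl | hblt
  · linarith
  -- j - 1 is a valid index, D := h j - h (j-1)
  obtain ⟨m, rfl⟩ : ∃ m, j = m + 1 := ⟨j - 1, by omega⟩
  set D : ℝ := h (m + 1) - h m with hD
  have sum1 : h (m + 1) - h a ≤ (m + 1 - a : ℕ) * D := by
    have := tele h a (m + 1) haj
    calc h (m + 1) - h a = ∑ k ∈ Finset.Ico a (m + 1), (h (k + 1) - h k) := this.symm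
      _ ≤ ∑ _k ∈ Finset.Ico a (m + 1), D := by
          apply Finset.sum_le_sum
          intro k hk
          simp only [Finset.mem_Ico] at hk
          exact mono m k hk.1 (by omega) (by omega)
      _ = (m + 1 - a : ℕ) * D := by rw [Finset.sum_const, Nat.card_Ico]; simp [nsmul_eq_mul]
  have sum2 : (b - (m + 1) : ℕ) * D ≤ h b - h (m + 1) := by
    have := tele h (m + 1) b hjb
    calc (b - (m + 1) : ℕ) * D = ∑ _k ∈ Finset.Ico (m + 1) b, D := by
          rw [Finset.sum_const, Nat.card_Ico]; simp [nsmul_eq_mul]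
      _ ≤ ∑ k ∈ Finset.Ico (m + 1) b, (h (k + 1) - h k) := by
          apply Finset.sum_le_sum
          intro k hk
          simp only [Finset.mem_Ico] at hk
          exact mono k m (by omega) (by omega) hk.2
      _ = h b - h (m + 1) := this
  have hc1 : (0:ℝ) < (m + 1 - a : ℕ) := by
    have : 0 < m + 1 - a := by omega
    exact_mod_cast this
  have hDpos : 0 < D := by
    nlinarith
  have hc2 : (0:ℝ) ≤ (b - (m + 1) : ℕ) := by positivity
  nlinarith

/-- If `f, g` are convex on the integer segment `{0, …, d}` with zero boundary
values, and `g ≤ f` at every interior point where `f` is strictly convex, then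
`g ≤ f` everywhere on `{0, …, d}`. -/
theorem stmt_5 (d : ℕ) (hd : 1 ≤ d) (f g : ℕ → ℝ)
    (hfconv : ∀ i, 1 ≤ i → i + 1 ≤ d → 0 ≤ f (i + 1) - 2 * f i + f (i - 1))
    (hgconv : ∀ i, 1 ≤ i → i + 1 ≤ d → 0 ≤ g (i + 1) - 2 * g i + g (i - 1))
    (hf0 : f 0 = 0) (hfd : f d = 0) (hg0 : g 0 = 0) (hgd : g d = 0)
    (hle : ∀ i, 1 ≤ i → i + 1 ≤ d → 0 < f (i + 1) - 2 * f i + f (i - 1) → g i ≤ f i) :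
    ∀ i, i ≤ d → g i ≤ f i := by
  classical
  intro i hid
  by_contra hgt
  push_neg at hgt
  have hi0 : i ≠ 0 := by rintro rfl; rw [hf0, hg0] at hgt; exact lt_irrefl _ hgt
  have hiD : i ≠ d := by rintro rfl; rw [hfd, hgd] at hgt; exact lt_irrefl _ hgt
  set P : ℕ → Prop := fun j => g j ≤ f j with hP
  have hP0 : P 0 := by simp [hP, hf0, hg0]
  have hPd : P d := by simp [hP, hfd, hgd]
  have hPi : ¬ P i := not_le.mpr hgt
  set a := Nat.findGreatest P i with ha_def
  have haP : P a := Nat.findGreatest_spec (Nat.zero_le i) hP0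
  have hai : a ≤ i := Nat.findGreatest_le i
  have hai' : a < i := lt_of_le_of_ne hai (fun h => hPi (h ▸ haP))
  have hex : ∃ k, P (i + k) := ⟨d - i, by rwa [Nat.add_sub_cancel' hid]⟩
  set kk := Nat.find hex with hk_def
  set b := i + kk with hb_def
  have hbP : P b := Nat.find_spec hex
  have hbd : b ≤ d := by
    have : kk ≤ d - i := Nat.find_min' hex (by rwa [Nat.add_sub_cancel' hid])
    omega
  have hib : i < b := by
    have : kk ≠ 0 := by
      intro h0
      apply hPi
      have := hbP
      rw [hb_def, h0] at this
      simpa using this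
    omega
  -- no good point strictly between a and b
  have hnoP : ∀ k, a < k → k < b → ¬ P k := by
    intro k hak hkb hPk
    rcases Nat.lt_or_ge k i with hki | hki
    · exact Nat.findGreatest_is_greatest hak (le_of_lt hki) hPk
    · have : k - i < kk := by omega
      exact Nat.find_min hex this (by rwa [Nat.add_sub_cancel' hki] )
  -- f has zero second difference strictly between a and b
  have hflat : ∀ k, a < k → k < b → f (k + 1) - 2 * f k + f (k - 1) = 0 := by
    intro k hak hkb
    have h1 : 1 ≤ k := by omega
    have h2 : k + 1 ≤ d := by omega
    have hge := hfconv k h1 h2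
    rcases eq_or_lt_of_le hge with h | h
    · exact h.symm
    · exact absurd (hle k h1 h2 h) (hnoP k hak hkb)
  have key := chord (fun j => g j - f j) a b
    (by
      intro k hak hkb
      have h1 : 1 ≤ k := by omega
      have h2 : k + 1 ≤ d := by omega
      have := hgconv k h1 h2
      have hf := hflat k hak hkb
      linarith)
    (by simpa using haP) (by simpa using hbP) i (le_of_lt hai') (le_of_lt hib)
  linarith
end

section
/- Let $V$ be a finite-dimensional real inner product space with basis $\alpha_1, \dots, \alpha_r$ satisfying $\langle \alpha_i, \alpha_j\rangle \le 0$ for $i \neq j$, dual basis $\varpi_1, \dots, \varpi_r$ with $\langle \alpha_i, \varpi_j\rangle = \delta_{ij}$ and $\langle \varpi_i, \varpi_j \rangle \ge 0$. Let $C^- = \{Y \mid \forall i, \langle \alpha_i, Y\rangle \le 0\}$, let $p : V \to C^-$ be the nearest-point projection onto the closed convex cone $C^-$, and define the partial order $Y' \prec Y$ by $\langle \varpi_i, Y'\rangle \le \langle \varpi_i, Y\rangle$ for all $i$. Then for every $Y_0 \in V$, the projection $p(Y_0)$ is the greatest element of the set $\{Y \in C^- \mid Y \prec Y_0\}$: it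 lies in this set and every $Y' \in C^-$ with $Y' \prec Y_0$ satisfies $Y' \prec p(Y_0)$. -/
/-!
The nearest point `p` of the chamber to `Y₀` is characterised by the variational inequality
`⟪Y₀ - p, z - p⟫ ≤ 0` on the chamber. Testing it at `p - ϖᵢ` shows that `Y₀ - p` has nonnegative
coordinates in the basis `α`, and testing it at `0` and `2p` gives `⟪Y₀ - p, p⟫ = 0`, hence
complementary slackness: `p` lies on the wall `⟪αᵢ, ·⟫ = 0` wherever `Y₀ - p` has a positive
coordinate. Now take `Y' ≼ Y₀` in the chamber. Wherever `p - Y'` has a negative coordinate, `p` is on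
the corresponding wall, so `⟪αᵢ, p - Y'⟫ ≥ 0` there; for an obtuse basis this forces the negative
part of `p - Y'` to vanish.
-/

open scoped RealInnerProductSpace

section

variable {V : Type*} [NormedAddCommGroup V] [InnerProductSpace ℝ V]

theorem real_inner_sub_le_zero_of_forall_norm_sub_le {K : Set V} (hK : Convex ℝ K) {u p : V}
    (hp : p ∈ K) (hmin : ∀ z ∈ K, ‖u - p‖ ≤ ‖u - z‖) {z : V} (hz : z ∈ K) :
    ⟪u - p, z - p⟫ ≤ 0 := by
  have : Nonempty K := ⟨⟨p, hp⟩⟩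
  refine (norm_eq_iInf_iff_real_inner_le_zero hK hp).mp ?_ z hz
  exact le_antisymm (le_ciInf fun w => hmin w w.2)
    (ciInf_le (f := fun w : K => ‖u - w‖) ⟨0, by rintro _ ⟨w, rfl⟩; positivity⟩ ⟨p, hp⟩)

def negChamber {ι : Type*} (α : ι → V) : Set V := {z | ∀ i, ⟪α i, z⟫ ≤ 0}

section Chamber

variable {ι : Type*} {α : ι → V} {u p : V}

theorem convex_negChamber : Convex ℝ (negChamber α) := by
  simp only [negChamber, Set.ofPred_forall]
  exact convex_iInter fun i => convex_halfSpace_le (innerₛₗ ℝ (α i)).isLinear 0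

theorem smul_mem_negChamber {z : V} (hz : z ∈ negChamber α) {t : ℝ} (ht : 0 ≤ t) :
    t • z ∈ negChamber α := fun i => by
  rw [real_inner_smul_right]
  exact mul_nonpos_of_nonneg_of_nonpos ht (hz i)

theorem real_inner_sub_proj_le_zero (hp : p ∈ negChamber α)
    (hmin : ∀ z ∈ negChamber α, ‖u - p‖ ≤ ‖u - z‖) {z : V} (hz : z ∈ negChamber α) :
    ⟪u - p, z - p⟫ ≤ 0 :=
  real_inner_sub_le_zero_of_forall_norm_sub_le convex_negChamber hp hmin hz

theorem real_inner_sub_proj_self_eq_zero (hp : p ∈ negChamber α)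
    (hmin : ∀ z ∈ negChamber α, ‖u - p‖ ≤ ‖u - z‖) : ⟪u - p, p⟫ = 0 := by
  have h0 := real_inner_sub_proj_le_zero hp hmin (smul_mem_negChamber hp le_rfl)
  have h2 := real_inner_sub_proj_le_zero hp hmin (smul_mem_negChamber hp zero_le_two)
  rw [zero_smul, zero_sub, inner_neg_right] at h0
  rw [two_smul, add_sub_cancel_right] at h2
  linarith

theorem real_inner_sub_proj_nonneg_of_inner_eq_ite [DecidableEq ι] {ϖ : ι → V}
    (hdual : ∀ i j, ⟪α i, ϖ j⟫ = if i = j then (1 : ℝ) else 0) (hp : p ∈ negChamber α)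
    (hmin : ∀ z ∈ negChamber α, ‖u - p‖ ≤ ‖u - z‖) (i : ι) : 0 ≤ ⟪ϖ i, u - p⟫ := by
  have hmem : p - ϖ i ∈ negChamber α := fun j => by
    rw [inner_sub_right, hdual]
    split_ifs <;> linarith [hp j]
  have := real_inner_sub_proj_le_zero hp hmin hmem
  rw [sub_sub_cancel_left, inner_neg_right, real_inner_comm] at this
  linarith

end Chamber

namespace Module.Basis

variable {ι : Type*} (α : Basis ι ℝ V)

theorem real_inner_eq_repr_of_inner_eq_ite [DecidableEq ι] {ϖ : ι → V}
    (hdual : ∀ i j, ⟪α i, ϖ j⟫ = if i = j then (1 : ℝ) else 0) (i : ι) (v : V) :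
    ⟪ϖ i, v⟫ = α.repr v i := by
  have : innerₛₗ ℝ (ϖ i) = α.coord i :=
    α.ext fun j => by simp [real_inner_comm (α j), hdual, Finsupp.single_apply]
  exact LinearMap.congr_fun this v

/-- The negative part `d` of `w` satisfies `⟪d, w⟫ ≤ 0` and, by obtuseness, `⟪d, w - d⟫ ≥ 0`,
so `d = 0`. -/
theorem repr_nonneg_of_real_inner_nonneg [Fintype ι]
    (hobtuse : ∀ i j, i ≠ j → ⟪α i, α j⟫ ≤ 0) {w : V}
    (hw : ∀ i, α.repr w i < 0 → 0 ≤ ⟪α i, w⟫) (i : ι) : 0 ≤ α.repr w i := by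
  set b := α.repr w
  set N := Finset.univ.filter fun i => b i < 0
  set d := ∑ i ∈ N, b i • α i
  have hsplit : w - d = ∑ j ∈ Finset.univ.filter (fun j => ¬ b j < 0), b j • α j := by
    conv_lhs => rw [← α.sum_repr w,
      ← Finset.sum_filter_add_sum_filter_not Finset.univ (fun j => b j < 0)]
    exact add_sub_cancel_left _ _
  have hdw : ⟪d, w⟫ ≤ 0 := by
    rw [sum_inner]
    refine Finset.sum_nonpos fun j hj => ?_
    have hbj := (Finset.mem_filter.mp hj).2
    rw [real_inner_smul_left]
    exact mul_nonpos_of_nonpos_of_nonneg hbj.le (hw j hbj)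
  have hdwd : 0 ≤ ⟪d, w - d⟫ := by
    rw [hsplit, sum_inner]
    refine Finset.sum_nonneg fun j hj => ?_
    have hbj := (Finset.mem_filter.mp hj).2
    simp only [real_inner_smul_left, inner_sum, real_inner_smul_right]
    refine Finset.sum_nonneg fun k hk => ?_
    have hbk := (Finset.mem_filter.mp hk).2
    have hjk : j ≠ k := by rintro rfl; exact hbk hbj
    have := mul_nonpos_of_nonneg_of_nonpos (not_lt.mp hbk) (hobtuse j k hjk)
    nlinarith
  have hd : d = 0 := by
    rw [inner_sub_right] at hdwd
    exact real_inner_self_nonpos.mp (by linarith)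
  by_contra! hi
  have := linearIndependent_iff'.mp α.linearIndependent N b hd i (by simpa [N] using hi)
  exact hi.ne this

/-- Every term of the expansion `⟪u - p, p⟫ = ∑ ⟪ϖ i, u - p⟫ * ⟪α i, p⟫` is `≤ 0`, and the sum
vanishes. -/
theorem real_inner_sub_proj_mul_inner_eq_zero [Fintype ι] [DecidableEq ι] {ϖ : ι → V}
    (hdual : ∀ i j, ⟪α i, ϖ j⟫ = if i = j then (1 : ℝ) else 0) {u p : V}
    (hp : p ∈ negChamber α) (hmin : ∀ z ∈ negChamber α, ‖u - p‖ ≤ ‖u - z‖) (i : ι) :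
    ⟪ϖ i, u - p⟫ * ⟪α i, p⟫ = 0 := by
  have hsum : ∑ j, ⟪ϖ j, u - p⟫ * ⟪α j, p⟫ = 0 := by
    rw [← real_inner_sub_proj_self_eq_zero hp hmin]
    conv_rhs => rw [← α.sum_repr (u - p)]
    simp only [sum_inner, real_inner_smul_left, α.real_inner_eq_repr_of_inner_eq_ite hdual]
  refine (Finset.sum_eq_zero_iff_of_nonpos fun j _ => ?_).mp hsum i (Finset.mem_univ i)
  exact mul_nonpos_of_nonneg_of_nonpos
    (real_inner_sub_proj_nonneg_of_inner_eq_ite hdual hp hmin j) (hp j)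

end Module.Basis

end

theorem stmt_6_general {V : Type*} [NormedAddCommGroup V] [InnerProductSpace ℝ V]
    {r : ℕ}
    (α : Module.Basis (Fin r) ℝ V) (ϖ : Fin r → V)
    (hdual : ∀ i j, ⟪α i, ϖ j⟫ = if i = j then (1 : ℝ) else 0)
    (hobtuse : ∀ i j, i ≠ j → ⟪α i, α j⟫ ≤ 0)
    (Y₀ p : V)
    (hpmem : ∀ i, ⟪α i, p⟫ ≤ 0)
    (hproj : ∀ z, (∀ i, ⟪α i, z⟫ ≤ 0) → ‖Y₀ - p‖ ≤ ‖Y₀ - z‖) :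
    (∀ i, ⟪ϖ i, p⟫ ≤ ⟪ϖ i, Y₀⟫) ∧
      ∀ Y', (∀ i, ⟪α i, Y'⟫ ≤ 0) → (∀ i, ⟪ϖ i, Y'⟫ ≤ ⟪ϖ i, Y₀⟫) →
        ∀ i, ⟪ϖ i, Y'⟫ ≤ ⟪ϖ i, p⟫ := by
  have hcoord := α.real_inner_eq_repr_of_inner_eq_ite hdual
  have hlower := real_inner_sub_proj_nonneg_of_inner_eq_ite hdual hpmem hproj
  have hslack := α.real_inner_sub_proj_mul_inner_eq_zero hdual hpmem hproj
  simp only [inner_sub_right] at hlower hslack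
  refine ⟨fun i => by linarith [hlower i], fun Y' hY' hle i => ?_⟩
  suffices 0 ≤ α.repr (p - Y') i by rwa [← hcoord, inner_sub_right, sub_nonneg] at this
  refine α.repr_nonneg_of_real_inner_nonneg hobtuse (fun j hj => ?_) i
  rw [← hcoord, inner_sub_right] at hj
  have hwall : ⟪α j, p⟫ = 0 :=
    (mul_eq_zero.mp (hslack j)).resolve_left (by linarith [hle j])
  rw [inner_sub_right, hwall]
  linarith [hY' j]

/-- The nearest-point projection of `Y₀` onto the negative Weyl chamber
`C⁻ = {Y | ∀ i, ⟪αᵢ, Y⟫ ≤ 0}` is the greatest lower bound of `Y₀` in the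
dominance order `Y' ≺ Y ↔ ∀ i, ⟪ϖᵢ, Y'⟫ ≤ ⟪ϖᵢ, Y⟫`. -/
theorem stmt_6 {V : Type*} [NormedAddCommGroup V] [InnerProductSpace ℝ V]
    [FiniteDimensional ℝ V] {r : ℕ}
    (α : Module.Basis (Fin r) ℝ V) (ϖ : Fin r → V)
    (hdual : ∀ i j, ⟪α i, ϖ j⟫ = if i = j then (1 : ℝ) else 0)
    (hobtuse : ∀ i j, i ≠ j → ⟪α i, α j⟫ ≤ 0)
    (hweights : ∀ i j, 0 ≤ ⟪ϖ i, ϖ j⟫)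
    (Y₀ p : V)
    (hpmem : ∀ i, ⟪α i, p⟫ ≤ 0)
    (hproj : ∀ z, (∀ i, ⟪α i, z⟫ ≤ 0) → ‖Y₀ - p‖ ≤ ‖Y₀ - z‖) :
    (∀ i, ⟪ϖ i, p⟫ ≤ ⟪ϖ i, Y₀⟫) ∧
      ∀ Y', (∀ i, ⟪α i, Y'⟫ ≤ 0) → (∀ i, ⟪ϖ i, Y'⟫ ≤ ⟪ϖ i, Y₀⟫) →
        ∀ i, ⟪ϖ i, Y'⟫ ≤ ⟪ϖ i, p⟫ :=
  stmt_6_general α ϖ hdual hobtuse Y₀ p hpmem hproj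
end

section
/- Let $V$ be a finite-dimensional real inner product space with basis $\alpha_1, \dots, \alpha_r$ such that $\langle \alpha_i, \alpha_j\rangle \le 0$ for $i \neq j$, and dual basis $\varpi_1, \dots, \varpi_r$ ($\langle \alpha_i, \varpi_j\rangle = \delta_{ij}$) with $\langle \varpi_i, \varpi_j\rangle \ge 0$ for all $i,j$. Let $C^- = \{Y \mid \forall i, \langle\alpha_i, Y\rangle \le 0\}$. Then there exists $\tau > 0$ such that for all $\varepsilon \in (0,1)$ and all $Y_1, Y_2 \in C^-$ with $\langle\varpi_i, Y_1\rangle \le \langle\varpi_i, Y_2\rangle$ for all $i$ and $\|Y_2 - Y_1\| \ge -\log\varepsilon$, there exists an index $k$ with both $\langle\varpi_k, Y_1\rangle \le \langle\varpi_k, Y_2\rangle + \tau \log\varepsilon$ and $\langle\alpha_k, Y_1\rangle \le \tau\log\varepsilon$. -/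
open scoped RealInnerProductSpace

/-!
Write `D = Y₂ - Y₁`. Since `ϖ` is dual to the basis `α`, the coordinates of `D` are `⟪ϖ i, D⟫`,
so `‖D‖² = ∑ i, ⟪ϖ i, D⟫ * ⟪α i, D⟫`, and every `⟪ϖ i, D⟫` is nonnegative by dominance. If the
conclusion failed for every `k`, then in each term one of the two factors would be at most
`τ * (-log ε)`, which bounds `‖D‖²` by `τ * (-log ε) * S * ‖D‖` with `S` depending only on
`α` and `ϖ`. For `τ < 1 / S` this contradicts `‖D‖ ≥ -log ε > 0`.
-/

lemma mul_le_mul_add_of_le_or_le {a b t A B : ℝ} (ha : 0 ≤ a) (haA : a ≤ A) (hbB : b ≤ B)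
    (ht : 0 ≤ t) (hB : 0 ≤ B) (h : a ≤ t ∨ b ≤ t) : a * b ≤ t * (A + B) := by
  rcases h with h | h <;> nlinarith

namespace Module.Basis

variable {ι V : Type*} [DecidableEq ι] [NormedAddCommGroup V] [InnerProductSpace ℝ V]
  (α : Basis ι ℝ V) {ϖ : ι → V} (hdual : ∀ i j, ⟪α i, ϖ j⟫ = if i = j then (1 : ℝ) else 0)
include hdual

lemma repr_apply_eq_inner_of_dual_s7 (Y : V) (j : ι) : α.repr Y j = ⟪ϖ j, Y⟫ := by
  have hcoord : α.coord j = innerₛₗ ℝ (ϖ j) := α.ext fun i => by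
    rw [coord_apply, repr_self, Finsupp.single_apply, innerₛₗ_apply_apply, real_inner_comm, hdual]
  exact LinearMap.congr_fun hcoord Y

lemma norm_sq_eq_sum_inner_mul_inner_of_dual [Fintype ι] (D : V) :
    ‖D‖ ^ 2 = ∑ i, ⟪ϖ i, D⟫ * ⟪α i, D⟫ := by
  rw [← real_inner_self_eq_norm_sq]
  nth_rewrite 1 [← α.sum_repr D]
  simp only [sum_inner, real_inner_smul_left, α.repr_apply_eq_inner_of_dual_s7 hdual]

lemma norm_le_of_inner_le_or_inner_le_of_dual [Fintype ι] {D : V} {t : ℝ} (ht : 0 ≤ t)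
    (hD : ∀ i, 0 ≤ ⟪ϖ i, D⟫) (hsmall : ∀ i, ⟪ϖ i, D⟫ ≤ t ∨ ⟪α i, D⟫ ≤ t) :
    ‖D‖ ≤ t * ∑ i, (‖ϖ i‖ + ‖α i‖) := by
  have hsq : ‖D‖ * ‖D‖ ≤ ‖D‖ * (t * ∑ i, (‖ϖ i‖ + ‖α i‖)) := calc
    ‖D‖ * ‖D‖ = ∑ i, ⟪ϖ i, D⟫ * ⟪α i, D⟫ := by
      rw [← sq, α.norm_sq_eq_sum_inner_mul_inner_of_dual hdual]
    _ ≤ ∑ i, t * (‖ϖ i‖ * ‖D‖ + ‖α i‖ * ‖D‖) := by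
      refine Finset.sum_le_sum fun i _ => ?_
      exact mul_le_mul_add_of_le_or_le (hD i) (real_inner_le_norm _ _)
        (real_inner_le_norm _ _) ht (by positivity) (hsmall i)
    _ = ‖D‖ * (t * ∑ i, (‖ϖ i‖ + ‖α i‖)) := by
      simp only [Finset.mul_sum]
      exact Finset.sum_congr rfl fun i _ => by ring
  rcases (norm_nonneg D).eq_or_lt with hD0 | hD0
  · rw [← hD0]
    exact mul_nonneg ht (Finset.sum_nonneg fun i _ => by positivity)
  · exact le_of_mul_le_mul_left hsq hD0

end Module.Basis

theorem stmt_7_general {V : Type*} [NormedAddCommGroup V] [InnerProductSpace ℝ V]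
    {r : ℕ}
    (α : Module.Basis (Fin r) ℝ V) (ϖ : Fin r → V)
    (hdual : ∀ i j, ⟪α i, ϖ j⟫ = if i = j then (1 : ℝ) else 0) :
    ∃ τ : ℝ, 0 < τ ∧ ∀ ε : ℝ, 0 < ε → ε < 1 → ∀ Y₁ Y₂ : V,
      (∀ i, ⟪α i, Y₁⟫ ≤ 0) → (∀ i, ⟪α i, Y₂⟫ ≤ 0) →
      (∀ i, ⟪ϖ i, Y₁⟫ ≤ ⟪ϖ i, Y₂⟫) →
      -Real.log ε ≤ ‖Y₂ - Y₁‖ →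
      ∃ k, ⟪ϖ k, Y₁⟫ ≤ ⟪ϖ k, Y₂⟫ + τ * Real.log ε ∧
        ⟪α k, Y₁⟫ ≤ τ * Real.log ε := by
  set S := ∑ i, (‖ϖ i‖ + ‖α i‖)
  have hS : 0 ≤ S := Finset.sum_nonneg fun i _ => by positivity
  refine ⟨1 / (S + 1), by positivity, fun ε hε0 hε1 Y₁ Y₂ _ hY₂ hdom hgap => ?_⟩
  by_contra! hcon
  have hL : 0 < -Real.log ε := neg_pos.2 (Real.log_neg hε0 hε1)
  have hsmall : ∀ i, ⟪ϖ i, Y₂ - Y₁⟫ ≤ 1 / (S + 1) * -Real.log ε ∨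
      ⟪α i, Y₂ - Y₁⟫ ≤ 1 / (S + 1) * -Real.log ε := fun i => by
    rw [inner_sub_right, inner_sub_right]
    by_cases hi : ⟪ϖ i, Y₁⟫ ≤ ⟪ϖ i, Y₂⟫ + 1 / (S + 1) * Real.log ε
    · exact Or.inr (by linarith [hcon i hi, hY₂ i])
    · exact Or.inl (by linarith)
  have hnorm := α.norm_le_of_inner_le_or_inner_le_of_dual hdual (by positivity)
    (fun i => by rw [inner_sub_right]; linarith [hdom i]) hsmall
  have hτS : 1 / (S + 1) * S < 1 := by
    rw [div_mul_eq_mul_div, one_mul, div_lt_one (by positivity)]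
    linarith
  nlinarith

/-- A large gap between two Weyl-chamber elements in the dominance order forces,
for some index `k`, a definite drop in the `k`-th fundamental-weight coordinate
together with strict negativity of the `k`-th simple root. -/
theorem stmt_7 {V : Type*} [NormedAddCommGroup V] [InnerProductSpace ℝ V]
    [FiniteDimensional ℝ V] {r : ℕ}
    (α : Module.Basis (Fin r) ℝ V) (ϖ : Fin r → V)
    (hdual : ∀ i j, ⟪α i, ϖ j⟫ = if i = j then (1 : ℝ) else 0)
    (hobtuse : ∀ i j, i ≠ j → ⟪α i, α j⟫ ≤ 0)
    (hweights : ∀ i j, 0 ≤ ⟪ϖ i, ϖ j⟫) :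
    ∃ τ : ℝ, 0 < τ ∧ ∀ ε : ℝ, 0 < ε → ε < 1 → ∀ Y₁ Y₂ : V,
      (∀ i, ⟪α i, Y₁⟫ ≤ 0) → (∀ i, ⟪α i, Y₂⟫ ≤ 0) →
      (∀ i, ⟪ϖ i, Y₁⟫ ≤ ⟪ϖ i, Y₂⟫) →
      -Real.log ε ≤ ‖Y₂ - Y₁‖ →
      ∃ k, ⟪ϖ k, Y₁⟫ ≤ ⟪ϖ k, Y₂⟫ + τ * Real.log ε ∧
        ⟪α k, Y₁⟫ ≤ τ * Real.log ε :=
  stmt_7_general α ϖ hdual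
end

section
/- Let $r \ge 1$ and let $a_1, \dots, a_r, c_1, \dots, c_r$ be positive reals. Set $m = \min_{1\le i \le r} a_i/c_i$ and $b = \#\{i \mid a_i/c_i = m\}$. Then there exist constants $0 < k_1 \le k_2$ and $T_0 > 0$ such that for all $T \ge T_0$, $k_1 e^{-mT} T^{b-1} \le \int_{\{t \in \mathbb{R}_{\ge 0}^r : \sum_i c_i t_i \ge T\}} e^{-\sum_i a_i t_i}\, dt \le k_2 e^{-mT} T^{b-1}$. -/
/-!
Fubini in the coordinate `tᵢ` writes the integral as `∫₀^∞ e^{-aᵢ x} F(T - cᵢ x) dx`, where `F` is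
the same integral in one dimension less. Peel off a coordinate with `aᵢ/cᵢ` maximal, so that the
remaining ratios still have minimum `m`. If `aᵢ/cᵢ > m`, the factor `e^{-(aᵢ - m cᵢ) x}` is
integrable, so `F ≍ e^{-mT} T^p` passes to the new integral unchanged (from below because `F` is
antitone). If `aᵢ/cᵢ = m`, the integrand is `≍ e^{-mT} T^p` on an interval of length `≍ T`, and
the power of `T` goes up by one.
-/

open MeasureTheory Real Set Filter
open scoped ENNReal

noncomputable def orthantTail {n : ℕ} (a c : Fin n → ℝ) (T : ℝ) : ℝ≥0∞ :=
  ∫⁻ t in {t : Fin n → ℝ | (∀ i, 0 ≤ t i) ∧ T ≤ ∑ i, c i * t i},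
    ENNReal.ofReal (exp (-(∑ i, a i * t i)))

noncomputable def expConv (a c : ℝ) (F : ℝ → ℝ≥0∞) (T : ℝ) : ℝ≥0∞ :=
  ∫⁻ x in Ici 0, ENNReal.ofReal (exp (-(a * x))) * F (T - c * x)

lemma measurableSet_orthantTail {n : ℕ} (c : Fin n → ℝ) (T : ℝ) :
    MeasurableSet {t : Fin n → ℝ | (∀ i, 0 ≤ t i) ∧ T ≤ ∑ i, c i * t i} :=
  ((isClosed_le continuous_const continuous_id).inter (isClosed_le continuous_const
    (continuous_finsetSum _ fun i _ => continuous_const.mul (continuous_apply i)))).measurableSet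

lemma orthantTail_eq_expConv {n : ℕ} (a c : Fin (n + 1) → ℝ) (i : Fin (n + 1)) (T : ℝ) :
    orthantTail a c T =
      expConv (a i) (c i) (orthantTail (a ∘ i.succAbove) (c ∘ i.succAbove)) T := by
  set e := MeasurableEquiv.piFinSuccAbove (fun _ : Fin (n + 1) => ℝ) i with he_def
  have he : ∀ x y, e.symm (x, y) = i.insertNth x y := fun _ _ => rfl
  have hsplit : ∀ (x : ℝ) (y : Fin n → ℝ),
      {t : Fin (n + 1) → ℝ | (∀ j, 0 ≤ t j) ∧ T ≤ ∑ j, c j * t j}.indicator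
        (fun t => ENNReal.ofReal (exp (-(∑ j, a j * t j)))) (i.insertNth x y) =
      (Ici 0).indicator (fun x => ENNReal.ofReal (exp (-(a i * x)))) x *
        {y : Fin n → ℝ | (∀ j, 0 ≤ y j) ∧ T - c i * x ≤ ∑ j, (c ∘ i.succAbove) j * y j}.indicator
          (fun y => ENNReal.ofReal (exp (-(∑ j, (a ∘ i.succAbove) j * y j)))) y := by
    intro x y
    simp only [indicator_apply, mem_ofPred_eq, mem_Ici, Fin.forall_iff_succAbove i,
      Fin.sum_univ_succAbove _ i, Fin.insertNth_apply_same, Fin.insertNth_apply_succAbove,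
      Function.comp_apply]
    by_cases hx : 0 ≤ x
    · simp only [hx, true_and, if_true, sub_le_iff_le_add']
      split_ifs <;> simp [← ENNReal.ofReal_mul (exp_nonneg _), ← exp_add, add_comm]
    · simp [hx]
  have hmeas := measurableSet_orthantTail c T
  rw [orthantTail, ← lintegral_indicator hmeas,
    ← (volume_preserving_piFinSuccAbove (fun _ : Fin (n + 1) => ℝ) i).symm.lintegral_comp_emb
      e.symm.measurableEmbedding, Measure.volume_eq_prod, lintegral_prod]
  · simp only [← he_def, he, hsplit]
    rw [expConv, ← lintegral_indicator measurableSet_Ici]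
    refine lintegral_congr fun x => ?_
    rw [lintegral_const_mul' _ _ (by simp [indicator_apply]; split_ifs <;> simp),
      lintegral_indicator (measurableSet_orthantTail _ _), indicator_mul_left]
    rfl
  · exact ((Measurable.indicator (by fun_prop) hmeas).comp e.symm.measurable).aemeasurable

lemma orthantTail_fin_zero (a c : Fin 0 → ℝ) (T : ℝ) :
    orthantTail a c T = (Iic 0).indicator 1 T := by
  by_cases hT : T ≤ 0 <;> simp [orthantTail, hT, volume_pi, Measure.pi_empty_univ]

lemma antitone_orthantTail {n : ℕ} (a c : Fin n → ℝ) : Antitone (orthantTail a c) :=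
  fun _ _ hT => lintegral_mono_set fun _ ht => ⟨ht.1, hT.trans ht.2⟩

lemma lintegral_exp_neg_mul_Ici {a : ℝ} (ha : 0 < a) (s : ℝ) :
    ∫⁻ x in Ici s, ENNReal.ofReal (exp (-(a * x))) = ENNReal.ofReal (exp (-(a * s)) / a) := by
  have hint : IntegrableOn (fun x => exp (-a * x)) (Ioi s) :=
    integrableOn_exp_mul_Ioi (neg_neg_of_pos ha) s
  simp only [← neg_mul] at hint ⊢
  rw [← Measure.restrict_congr_set Ioi_ae_eq_Ici, ← ofReal_integral_eq_lintegral_ofReal hint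
    (ae_of_all _ fun _ => exp_nonneg _), integral_exp_mul_Ioi (neg_neg_of_pos ha), neg_div_neg_eq]

section expConv

variable {a c : ℝ} {F : ℝ → ℝ≥0∞}

lemma expConv_le_of_le (ha : 0 < a) {M : ℝ} (hF : ∀ u, F u ≤ ENNReal.ofReal M) (T : ℝ) :
    expConv a c F T ≤ ENNReal.ofReal (a⁻¹ * M) := by
  calc expConv a c F T ≤ ∫⁻ x in Ici 0, ENNReal.ofReal (exp (-(a * x))) * ENNReal.ofReal M :=
        lintegral_mono fun x => by gcongr; exact hF _
    _ = ENNReal.ofReal (a⁻¹ * M) := by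
        rw [lintegral_mul_const' _ _ ENNReal.ofReal_ne_top, lintegral_exp_neg_mul_Ici ha,
          ← ENNReal.ofReal_mul (by positivity)]
        simp [div_eq_inv_mul]

lemma inv_mul_le_expConv (ha : 0 < a) (hc : 0 ≤ c) (hF : Antitone F) (T : ℝ) :
    ENNReal.ofReal a⁻¹ * F T ≤ expConv a c F T := by
  calc ENNReal.ofReal a⁻¹ * F T = ∫⁻ x in Ici 0, ENNReal.ofReal (exp (-(a * x))) * F T := by
        rw [lintegral_mul_const _ (by fun_prop), lintegral_exp_neg_mul_Ici ha]
        simp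
    _ ≤ expConv a c F T := setLIntegral_mono' measurableSet_Ici fun x hx => by
        gcongr
        exact hF (by nlinarith [mem_Ici.1 hx])

lemma expConv_indicator_Iic (ha : 0 < a) (hc : 0 < c) {T : ℝ} (hT : 0 ≤ T) :
    expConv a c ((Iic 0).indicator 1) T = ENNReal.ofReal (a⁻¹ * exp (-(a / c * T))) := by
  have h : ∀ x, ENNReal.ofReal (exp (-(a * x))) * (Iic 0).indicator 1 (T - c * x) =
      (Ici (T / c)).indicator (fun x => ENNReal.ofReal (exp (-(a * x)))) x := by
    intro x
    simp only [indicator_apply, mem_Iic, mem_Ici, sub_nonpos, div_le_iff₀ hc, mul_comm x]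
    split_ifs <;> simp
  rw [expConv, lintegral_congr h, lintegral_indicator measurableSet_Ici,
    Measure.restrict_restrict measurableSet_Ici,
    inter_eq_left.2 (Ici_subset_Ici.2 (div_nonneg hT hc.le)), lintegral_exp_neg_mul_Ici ha]
  congr 1
  field_simp

lemma expConv_le_head_add_tail (ha : 0 < a) (hc : 0 < c) {M k μ T₀ T : ℝ} {p : ℕ} (hk : 0 ≤ k)
    (hT₀ : 0 ≤ T₀) (hT : T₀ ≤ T) (hF : ∀ u, F u ≤ ENNReal.ofReal M)
    (hFT : ∀ u, T₀ ≤ u → F u ≤ ENNReal.ofReal (k * exp (-(μ * u)) * u ^ p)) :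
    expConv a c F T ≤ ENNReal.ofReal (k * exp (-(μ * T)) * T ^ p) *
        (∫⁻ x in Icc 0 ((T - T₀) / c), ENNReal.ofReal (exp (-((a - μ * c) * x)))) +
      ENNReal.ofReal (a⁻¹ * M * exp (a / c * T₀) * exp (-(a / c * T))) := by
  have hq : 0 ≤ (T - T₀) / c := div_nonneg (sub_nonneg.2 hT) hc.le
  rw [expConv, ← Icc_union_Ioi_eq_Ici hq,
    lintegral_union measurableSet_Ioi ((Iic_disjoint_Ioi le_rfl).mono_left Icc_subset_Iic_self)]
  gcongr ?_ + ?_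
  · rw [← lintegral_const_mul' _ _ ENNReal.ofReal_ne_top]
    refine setLIntegral_mono' measurableSet_Icc fun x ⟨hx0, hxq⟩ => ?_
    have hu : T₀ ≤ T - c * x := by rw [le_div_iff₀ hc] at hxq; linarith
    have hexp : exp (-(a * x)) * exp (-(μ * (T - c * x))) =
        exp (-(μ * T)) * exp (-((a - μ * c) * x)) := by
      rw [← exp_add, ← exp_add]; ring_nf
    calc ENNReal.ofReal (exp (-(a * x))) * F (T - c * x)
        ≤ ENNReal.ofReal (exp (-(a * x))) *
            ENNReal.ofReal (k * exp (-(μ * (T - c * x))) * (T - c * x) ^ p) := by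
          gcongr; exact hFT _ hu
      _ = ENNReal.ofReal (k * exp (-(μ * T)) * (T - c * x) ^ p * exp (-((a - μ * c) * x))) := by
          rw [← ENNReal.ofReal_mul (exp_nonneg _)]
          congr 1
          linear_combination (k * (T - c * x) ^ p) * hexp
      _ ≤ ENNReal.ofReal (k * exp (-(μ * T)) * T ^ p) *
            ENNReal.ofReal (exp (-((a - μ * c) * x))) := by
          have hT0 : 0 ≤ T := hT₀.trans hT
          rw [← ENNReal.ofReal_mul (by positivity)]
          gcongr
          · linarith
          · nlinarith
  · calc ∫⁻ x in Ioi ((T - T₀) / c), ENNReal.ofReal (exp (-(a * x))) * F (T - c * x)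
        ≤ ∫⁻ x in Ici ((T - T₀) / c), ENNReal.ofReal (exp (-(a * x))) * ENNReal.ofReal M :=
          (lintegral_mono_set Ioi_subset_Ici_self).trans
            (lintegral_mono fun x => by gcongr; exact hF _)
      _ = ENNReal.ofReal (a⁻¹ * M * exp (a / c * T₀) * exp (-(a / c * T))) := by
          rw [lintegral_mul_const' _ _ ENNReal.ofReal_ne_top, lintegral_exp_neg_mul_Ici ha,
            ← ENNReal.ofReal_mul (by positivity), mul_assoc, ← exp_add]
          congr 1
          field_simp
          ring_nf

lemma le_expConv_of_eq (hc : 0 < c) {μ k T₀ T : ℝ} {p : ℕ} (h : a = μ * c) (hk : 0 ≤ k)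
    (hT₀ : 0 ≤ T₀) (hT : 2 * T₀ ≤ T)
    (hFT : ∀ u, T₀ ≤ u → ENNReal.ofReal (k * exp (-(μ * u)) * u ^ p) ≤ F u) :
    ENNReal.ofReal (k / (2 ^ (p + 1) * c) * exp (-(μ * T)) * T ^ (p + 1)) ≤
      expConv a c F T := by
  have hT0 : 0 ≤ T := by linarith
  have hpt : ∀ x ∈ Icc 0 (T / (2 * c)), ENNReal.ofReal (k * exp (-(μ * T)) * (T / 2) ^ p) ≤
      ENNReal.ofReal (exp (-(a * x))) * F (T - c * x) := by
    rintro x ⟨hx0, hx⟩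
    have hcx : c * x ≤ T / 2 := by rw [le_div_iff₀ (by positivity)] at hx; linarith
    have hexp : exp (-(a * x)) * exp (-(μ * (T - c * x))) = exp (-(μ * T)) := by
      rw [← exp_add, h]; ring_nf
    calc ENNReal.ofReal (k * exp (-(μ * T)) * (T / 2) ^ p)
        ≤ ENNReal.ofReal (exp (-(a * x)) * (k * exp (-(μ * (T - c * x))) * (T - c * x) ^ p)) := by
          apply ENNReal.ofReal_le_ofReal
          rw [show exp (-(a * x)) * (k * exp (-(μ * (T - c * x))) * (T - c * x) ^ p) =
            k * exp (-(μ * T)) * (T - c * x) ^ p by linear_combination (k * (T - c * x) ^ p) * hexp]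
          gcongr
          linarith
      _ = ENNReal.ofReal (exp (-(a * x))) *
            ENNReal.ofReal (k * exp (-(μ * (T - c * x))) * (T - c * x) ^ p) :=
          ENNReal.ofReal_mul (exp_nonneg _)
      _ ≤ ENNReal.ofReal (exp (-(a * x))) * F (T - c * x) := by
          gcongr; exact hFT _ (by linarith)
  calc ENNReal.ofReal (k / (2 ^ (p + 1) * c) * exp (-(μ * T)) * T ^ (p + 1))
      = ENNReal.ofReal (k * exp (-(μ * T)) * (T / 2) ^ p) * volume (Icc 0 (T / (2 * c))) := by
        rw [Real.volume_Icc, ← ENNReal.ofReal_mul (by positivity)]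
        congr 1
        rw [div_pow]
        field_simp
        ring
    _ = ∫⁻ _ in Icc 0 (T / (2 * c)), ENNReal.ofReal (k * exp (-(μ * T)) * (T / 2) ^ p) :=
        (setLIntegral_const _ _).symm
    _ ≤ ∫⁻ x in Icc 0 (T / (2 * c)), ENNReal.ofReal (exp (-(a * x))) * F (T - c * x) :=
        setLIntegral_mono' measurableSet_Icc hpt
    _ ≤ expConv a c F T := lintegral_mono_set Icc_subset_Ici_self

end expConv

def IsExpPolyOrder (F : ℝ → ℝ≥0∞) (μ : ℝ) (p : ℕ) : Prop :=
  ∃ k₁ k₂ : ℝ, 0 < k₁ ∧ 0 < k₂ ∧ ∀ᶠ T in atTop,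
    ENNReal.ofReal (k₁ * exp (-(μ * T)) * T ^ p) ≤ F T ∧
      F T ≤ ENNReal.ofReal (k₂ * exp (-(μ * T)) * T ^ p)

lemma ofReal_expPoly_add_ofReal_exp_le {A B μ ν T : ℝ} {p : ℕ} (hA : 0 ≤ A) (hB : 0 ≤ B)
    (hμν : μ ≤ ν) (hT : 1 ≤ T) :
    ENNReal.ofReal (A * exp (-(μ * T)) * T ^ p) + ENNReal.ofReal (B * exp (-(ν * T))) ≤
      ENNReal.ofReal ((A + B) * exp (-(μ * T)) * T ^ p) := by
  have hpow : 1 ≤ T ^ p := one_le_pow₀ hT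
  have hexp : exp (-(ν * T)) ≤ exp (-(μ * T)) * T ^ p :=
    (exp_le_exp.2 (by nlinarith)).trans (le_mul_of_one_le_right (exp_nonneg _) hpow)
  rw [← ENNReal.ofReal_add (by positivity) (by positivity)]
  apply ENNReal.ofReal_le_ofReal
  nlinarith [mul_le_mul_of_nonneg_left hexp hB]

namespace IsExpPolyOrder

variable {F : ℝ → ℝ≥0∞} {μ : ℝ} {p : ℕ} {M a c : ℝ}

lemma expConv_of_lt (hF : IsExpPolyOrder F μ p) (hanti : Antitone F) (hM : 0 ≤ M)
    (hFM : ∀ u, F u ≤ ENNReal.ofReal M) (ha : 0 < a) (hc : 0 < c) (hlt : μ * c < a) :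
    IsExpPolyOrder (expConv a c F) μ p := by
  obtain ⟨k₁, k₂, hk₁, hk₂, hev⟩ := hF
  obtain ⟨T₀, hT₀⟩ := eventually_atTop.1 (hev.and (eventually_ge_atTop 0))
  have hT₀0 : 0 ≤ T₀ := (hT₀ T₀ le_rfl).2
  have hδ : 0 < a - μ * c := sub_pos.2 hlt
  refine ⟨a⁻¹ * k₁, k₂ * (a - μ * c)⁻¹ + a⁻¹ * M * exp (a / c * T₀), by positivity,
    by positivity, ?_⟩
  filter_upwards [hev, eventually_ge_atTop (max T₀ 1)] with T hT hT1
  have hT0 : 0 ≤ T := hT₀0.trans (le_of_max_le_left hT1)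
  refine ⟨?_, ?_⟩
  · calc ENNReal.ofReal (a⁻¹ * k₁ * exp (-(μ * T)) * T ^ p)
        = ENNReal.ofReal a⁻¹ * ENNReal.ofReal (k₁ * exp (-(μ * T)) * T ^ p) := by
          rw [← ENNReal.ofReal_mul (by positivity), mul_assoc, mul_assoc, mul_assoc]
      _ ≤ ENNReal.ofReal a⁻¹ * F T := by gcongr; exact hT.1
      _ ≤ expConv a c F T := inv_mul_le_expConv ha hc.le hanti T
  · calc expConv a c F T ≤ _ := expConv_le_head_add_tail ha hc hk₂.le hT₀0
          (le_of_max_le_left hT1) hFM fun u hu => (hT₀ u hu).1.2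
      _ ≤ ENNReal.ofReal (k₂ * exp (-(μ * T)) * T ^ p) * ENNReal.ofReal (a - μ * c)⁻¹ +
          ENNReal.ofReal (a⁻¹ * M * exp (a / c * T₀) * exp (-(a / c * T))) := by
          gcongr
          calc _ ≤ ∫⁻ x in Ici 0, ENNReal.ofReal (exp (-((a - μ * c) * x))) :=
                lintegral_mono_set Icc_subset_Ici_self
            _ = ENNReal.ofReal (a - μ * c)⁻¹ := by rw [lintegral_exp_neg_mul_Ici hδ]; simp
      _ = ENNReal.ofReal (k₂ * (a - μ * c)⁻¹ * exp (-(μ * T)) * T ^ p) +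
          ENNReal.ofReal (a⁻¹ * M * exp (a / c * T₀) * exp (-(a / c * T))) := by
          rw [← ENNReal.ofReal_mul (mul_nonneg (by positivity) (pow_nonneg hT0 p))]
          congr 2
          ring
      _ ≤ _ := ofReal_expPoly_add_ofReal_exp_le (by positivity) (by positivity)
          ((le_div_iff₀ hc).2 hlt.le) (le_of_max_le_right hT1)

lemma expConv_of_eq (hF : IsExpPolyOrder F μ p) (hM : 0 ≤ M)
    (hFM : ∀ u, F u ≤ ENNReal.ofReal M) (ha : 0 < a) (hc : 0 < c) (h : a = μ * c) :
    IsExpPolyOrder (expConv a c F) μ (p + 1) := by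
  obtain ⟨k₁, k₂, hk₁, hk₂, hev⟩ := hF
  obtain ⟨T₀, hT₀⟩ := eventually_atTop.1 (hev.and (eventually_ge_atTop 0))
  have hT₀0 : 0 ≤ T₀ := (hT₀ T₀ le_rfl).2
  refine ⟨k₁ / (2 ^ (p + 1) * c), k₂ / c + a⁻¹ * M * exp (a / c * T₀), by positivity,
    by positivity, ?_⟩
  filter_upwards [eventually_ge_atTop (max (2 * T₀) 1)] with T hT
  have hT2 : 2 * T₀ ≤ T := le_of_max_le_left hT
  have hT0 : 0 ≤ T := by linarith
  refine ⟨le_expConv_of_eq hc h hk₁.le hT₀0 hT2 fun u hu => (hT₀ u hu).1.1, ?_⟩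
  calc expConv a c F T ≤ _ := expConv_le_head_add_tail ha hc hk₂.le hT₀0 (by linarith) hFM
          fun u hu => (hT₀ u hu).1.2
    _ ≤ ENNReal.ofReal (k₂ * exp (-(μ * T)) * T ^ p) * ENNReal.ofReal (T / c) +
          ENNReal.ofReal (a⁻¹ * M * exp (a / c * T₀) * exp (-(a / c * T))) := by
        gcongr
        simp only [h, sub_self, zero_mul, neg_zero, exp_zero, ENNReal.ofReal_one,
          setLIntegral_const, one_mul, Real.volume_Icc, sub_zero]
        gcongr
        linarith
    _ = ENNReal.ofReal (k₂ / c * exp (-(μ * T)) * T ^ (p + 1)) +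
          ENNReal.ofReal (a⁻¹ * M * exp (a / c * T₀) * exp (-(a / c * T))) := by
        rw [← ENNReal.ofReal_mul (mul_nonneg (by positivity) (pow_nonneg hT0 p))]
        congr 2
        ring
    _ ≤ _ := ofReal_expPoly_add_ofReal_exp_le (by positivity) (by positivity)
          (by rw [h, mul_div_cancel_right₀ _ hc.ne']) (le_of_max_le_right hT)

end IsExpPolyOrder

lemma iInf_succAbove_eq_of_forall_le {α : Type*} [ConditionallyCompleteLinearOrder α] {n : ℕ}
    {f : Fin (n + 2) → α} {i : Fin (n + 2)} (hi : ∀ j, f j ≤ f i) :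
    ⨅ k, f (i.succAbove k) = ⨅ j, f j := by
  refine le_antisymm ?_ (le_ciInf fun k => ciInf_le (Finite.bddBelow_range f) _)
  obtain ⟨j, hj⟩ := exists_eq_ciInf_of_finite (f := f)
  rw [← hj]
  obtain rfl | ⟨k, rfl⟩ := i.eq_self_or_eq_succAbove j
  · exact (ciInf_le (Finite.bddBelow_range _) 0).trans (hi _)
  · exact ciInf_le (Finite.bddBelow_range _) k

lemma card_subtype_eq_card_subtype_succAbove_add {n : ℕ} (P : Fin (n + 1) → Prop)
    [DecidablePred P] (i : Fin (n + 1)) :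
    Nat.card {j // P j} = Nat.card {k // P (i.succAbove k)} + if P i then 1 else 0 := by
  simp only [Nat.card_eq_fintype_card, Fintype.card_subtype, Finset.card_filter]
  rw [Fin.sum_univ_succAbove _ i, add_comm]

lemma orthantTail_le_prod_inv {n : ℕ} (a c : Fin n → ℝ) (ha : ∀ i, 0 < a i) (T : ℝ) :
    orthantTail a c T ≤ ENNReal.ofReal (∏ i, (a i)⁻¹) := by
  induction n generalizing T with
  | zero =>
    rw [orthantTail_fin_zero, indicator_apply]
    split_ifs <;> simp
  | succ n ih =>
    rw [orthantTail_eq_expConv a c 0, Fin.prod_univ_succAbove _ 0]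
    exact expConv_le_of_le (ha 0) (fun u => ih _ _ (fun _ => ha _) u) T

lemma isExpPolyOrder_orthantTail_fin_one (a c : Fin 1 → ℝ) (ha : 0 < a 0) (hc : 0 < c 0) :
    IsExpPolyOrder (orthantTail a c) (a 0 / c 0) 0 := by
  refine ⟨(a 0)⁻¹, (a 0)⁻¹, inv_pos.2 ha, inv_pos.2 ha, ?_⟩
  filter_upwards [eventually_ge_atTop 0] with T hT
  rw [orthantTail_eq_expConv a c 0, funext (orthantTail_fin_zero _ _),
    expConv_indicator_Iic ha hc hT]
  simp

theorem isExpPolyOrder_orthantTail {n : ℕ} (a c : Fin (n + 1) → ℝ) (ha : ∀ i, 0 < a i)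
    (hc : ∀ i, 0 < c i) :
    IsExpPolyOrder (orthantTail a c) (⨅ i, a i / c i)
      (Nat.card {i // a i / c i = ⨅ j, a j / c j} - 1) := by
  induction n with
  | zero =>
    have hb : Nat.card {i : Fin 1 // a i / c i = a 0 / c 0} = 1 :=
      Nat.card_eq_one_iff_exists.2 ⟨⟨0, rfl⟩, fun j => Subtype.ext (Subsingleton.elim _ _)⟩
    have hm : ⨅ i, a i / c i = a 0 / c 0 := by
      simp only [Fin.fin_one_eq_zero, ciInf_const]
    rw [hm, hb]
    exact isExpPolyOrder_orthantTail_fin_one a c (ha 0) (hc 0)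
  | succ n ih =>
    obtain ⟨i, hi⟩ := Finite.exists_max fun j => a j / c j
    set m := ⨅ j, a j / c j
    have hm : ⨅ k, (a ∘ i.succAbove) k / (c ∘ i.succAbove) k = m :=
      iInf_succAbove_eq_of_forall_le hi
    have hF := ih (a ∘ i.succAbove) (c ∘ i.succAbove) (fun _ => ha _) (fun _ => hc _)
    rw [hm] at hF
    have hcard : 0 < Nat.card {k // a (i.succAbove k) / c (i.succAbove k) = m} := by
      obtain ⟨k, hk⟩ := exists_eq_ciInf_of_finite
        (f := fun k => (a ∘ i.succAbove) k / (c ∘ i.succAbove) k)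
      have : Nonempty {k // a (i.succAbove k) / c (i.succAbove k) = m} := ⟨⟨k, hk.trans hm⟩⟩
      exact Nat.card_pos
    have hM := orthantTail_le_prod_inv (a ∘ i.succAbove) (c ∘ i.succAbove) (fun _ => ha _)
    have hM0 : 0 ≤ ∏ k, ((a ∘ i.succAbove) k)⁻¹ :=
      Finset.prod_nonneg fun _ _ => (inv_pos.2 (ha _)).le
    have hmi : m ≤ a i / c i := ciInf_le (Finite.bddBelow_range _) i
    rw [funext (orthantTail_eq_expConv a c i), card_subtype_eq_card_subtype_succAbove_add _ i]
    by_cases him : a i / c i = m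
    · rw [if_pos him, Nat.add_sub_cancel, ← Nat.sub_add_cancel hcard]
      exact hF.expConv_of_eq hM0 hM (ha i) (hc i) ((div_eq_iff (hc i).ne').1 him)
    · rw [if_neg him, add_zero]
      exact hF.expConv_of_lt (antitone_orthantTail _ _) hM0 hM (ha i) (hc i)
        ((lt_div_iff₀ (hc i)).1 (lt_of_le_of_ne hmi (Ne.symm him)))

lemma setIntegral_eq_toReal_orthantTail {n : ℕ} (a c : Fin n → ℝ) (T : ℝ) :
    ∫ t in {t : Fin n → ℝ | (∀ i, 0 ≤ t i) ∧ T ≤ ∑ i, c i * t i}, exp (-(∑ i, a i * t i)) =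
      (orthantTail a c T).toReal :=
  integral_eq_lintegral_of_nonneg_ae (ae_of_all _ fun _ => exp_nonneg _)
    (Continuous.aestronglyMeasurable (by fun_prop))

/-- Asymptotics of the exponential integral over the part of the nonnegative
orthant `{t ≥ 0 : ∑ cᵢ tᵢ ≥ T}`: it is comparable to `e^{-mT} T^{b-1}`, where
`m = min aᵢ/cᵢ` and `b` is the number of indices achieving the minimum. -/
theorem stmt_9 (r : ℕ) [NeZero r] (a c : Fin r → ℝ)
    (ha : ∀ i, 0 < a i) (hc : ∀ i, 0 < c i)
    (m : ℝ) (hm : m = ⨅ i, a i / c i)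
    (b : ℕ) (hb : b = Nat.card {i : Fin r // a i / c i = m}) :
    ∃ k₁ k₂ T₀ : ℝ, 0 < k₁ ∧ k₁ ≤ k₂ ∧ 0 < T₀ ∧ ∀ T, T₀ ≤ T →
      k₁ * Real.exp (-(m * T)) * T ^ (b - 1) ≤
        (∫ t in {t : Fin r → ℝ | (∀ i, 0 ≤ t i) ∧ T ≤ ∑ i, c i * t i},
          Real.exp (-(∑ i, a i * t i))) ∧
      (∫ t in {t : Fin r → ℝ | (∀ i, 0 ≤ t i) ∧ T ≤ ∑ i, c i * t i},
          Real.exp (-(∑ i, a i * t i))) ≤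
        k₂ * Real.exp (-(m * T)) * T ^ (b - 1) := by
  obtain ⟨n, rfl⟩ := Nat.exists_eq_succ_of_ne_zero (NeZero.ne r)
  subst hm hb
  obtain ⟨k₁, k₂, hk₁, hk₂, hev⟩ := isExpPolyOrder_orthantTail a c ha hc
  obtain ⟨T₀, hT₀⟩ := eventually_atTop.1 hev
  refine ⟨k₁, max k₁ k₂, max T₀ 1, hk₁, le_max_left _ _, by positivity, fun T hT => ?_⟩
  have hfin : orthantTail a c T ≠ ⊤ :=
    ne_top_of_le_ne_top ENNReal.ofReal_ne_top (orthantTail_le_prod_inv a c ha T)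
  have hT0 : 0 ≤ T := by linarith [le_max_right T₀ 1]
  obtain ⟨hlow, hup⟩ := hT₀ T (le_of_max_le_left hT)
  rw [setIntegral_eq_toReal_orthantTail]
  refine ⟨(ENNReal.ofReal_le_iff_le_toReal hfin).1 hlow,
    ENNReal.toReal_le_of_le_ofReal (by positivity) (hup.trans (ENNReal.ofReal_le_ofReal ?_))⟩
  gcongr
  exact le_max_right _ _
end
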